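/- Let α ∈ Sⁿ and let r_α be any element of G preserving ℝ^{n+1}×{0} with r_α(α,1) = e₁. Then α ∈ BA(Sⁿ) if and only if there exists c > 0 such that ‖g_t r_α v‖ ≥ c for every t ≥ 0 and every nonzero v ∈ Λ₀ (equivalently, the forward orbit {g_t r_α Λ₀ : t ≥ 0} is bounded in the space of lattices 𝓛). -/

import Mathlib

open MeasureTheory

/-- The unit Euclidean sphere `Sⁿ` in `ℝ^{n+1}` (the ambient space `Fin (n+1) → ℝ`
carries the supremum norm). -/
noncomputable def unitSphere (n : ℕ) : Set (Fin (n + 1) → ℝ) :=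
  {x | ∑ i, x i ^ 2 = 1}

/-- The rational point `p/q` in `ℝ^{n+1}`. -/
noncomputable def ratPt (n : ℕ) (p : Fin (n + 1) → ℤ) (q : ℕ) : Fin (n + 1) → ℝ :=
  fun i => (p i : ℝ) / (q : ℝ)

/-- The quadratic form `Q(x) = x₁² + ⋯ + x_{n+1}² − x_{n+2}²` on `ℝ^{n+2}`. -/
noncomputable def Qform (n : ℕ) (x : Fin (n + 2) → ℝ) : ℝ :=
  (∑ i : Fin (n + 1), x i.castSucc ^ 2) - x (Fin.last (n + 1)) ^ 2

/-- `Λ₀ = ℤ^{n+2} ∩ L`, the integer points of the light cone `L = {Q = 0}`. -/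
noncomputable def Lambda0 (n : ℕ) : Set (Fin (n + 2) → ℝ) :=
  {v | (∀ i, ∃ m : ℤ, v i = (m : ℝ)) ∧ Qform n v = 0}

/-- Membership in `G = SO(Q)`: determinant one and preservation of `Q`. -/
def isSOQ (n : ℕ) (g : Matrix (Fin (n + 2)) (Fin (n + 2)) ℝ) : Prop :=
  g.det = 1 ∧ ∀ x, Qform n (g.mulVec x) = Qform n x

/-- The one-parameter diagonal flow `g_t`. -/
noncomputable def gFlow (n : ℕ) (t : ℝ) : Matrix (Fin (n + 2)) (Fin (n + 2)) ℝ :=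
  Matrix.of fun i j =>
    if i = 0 ∧ j = 0 then Real.cosh t
    else if i = 0 ∧ j = Fin.last (n + 1) then -Real.sinh t
    else if i = Fin.last (n + 1) ∧ j = 0 then -Real.sinh t
    else if i = Fin.last (n + 1) ∧ j = Fin.last (n + 1) then Real.cosh t
    else if i = j then 1 else 0

/-- The vector `e₁ = (1,0,…,0,1) ∈ L`. -/
noncomputable def eOne (n : ℕ) : Fin (n + 2) → ℝ :=
  fun i => if i = 0 then 1 else if i = Fin.last (n + 1) then 1 else 0

/-- The embedding `α ↦ (α,1)` of `Sⁿ` into the light cone. -/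
noncomputable def embedS (n : ℕ) (α : Fin (n + 1) → ℝ) : Fin (n + 2) → ℝ :=
  Fin.snoc α 1

/-- The vector `(p,q) ∈ ℝ^{n+2}` with first `n+1` coordinates `p` and last coordinate `q`. -/
noncomputable def vecPQ (n : ℕ) (p : Fin (n + 1) → ℤ) (q : ℕ) : Fin (n + 2) → ℝ :=
  Fin.snoc (fun i => (p i : ℝ)) (q : ℝ)

/-- `g` preserves the subspace `ℝ^{n+1} × {0}`. -/
def preservesHyperplane (n : ℕ) (g : Matrix (Fin (n + 2)) (Fin (n + 2)) ℝ) : Prop :=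
  ∀ x : Fin (n + 2) → ℝ, x (Fin.last (n + 1)) = 0 → g.mulVec x (Fin.last (n + 1)) = 0

/-- `ω(Λ)`: the infimum of the (sup) norms of the nonzero vectors of `Λ`. -/
noncomputable def omegaMin (n : ℕ) (Λ : Set (Fin (n + 2) → ℝ)) : ℝ :=
  sInf ((fun v => ‖v‖) '' {v | v ∈ Λ ∧ v ≠ 0})

/-- The lattice `g Λ₀`. -/
noncomputable def latticeOf (n : ℕ) (g : Matrix (Fin (n + 2)) (Fin (n + 2)) ℝ) :
    Set (Fin (n + 2) → ℝ) :=
  (fun v => g.mulVec v) '' Lambda0 n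

/-- `BA(Sⁿ)`: the set of badly approximable points of `Sⁿ`. -/
noncomputable def badlyApproximable (n : ℕ) : Set (Fin (n + 1) → ℝ) :=
  {α | α ∈ unitSphere n ∧ ∃ c > (0 : ℝ), ∀ (p : Fin (n + 1) → ℤ) (q : ℕ), 0 < q →
    ratPt n p q ∈ unitSphere n → c / (q : ℝ) < ‖α - ratPt n p q‖}

/-! For a light-cone vector `v = (p, q)` with `q > 0`, the vector `w = r_α v` has `w_last = q` and
`w_0 = ⟨α, p⟩`, and the gap `S = q - ⟨α, p⟩` satisfies `2 q S = q² ‖α - p/q‖₂²`. Under `g_t` the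
last coordinate of `w` becomes `q e^{-t} + S sinh t`, whose square is at least `q S / 2` for `t ≥ 0`,
while every coordinate of `g_t w` is at most `q e^{-t} + S e^t` in absolute value. Hence a lower
bound `q S ≳ c²` keeps the forward orbit away from `0`, and if `q S ≤ c² / 32` then at the time
`e^t = 4 q / c` the vector `g_t w` has norm at most `3 c / 8`. -/

open Real Matrix QuadraticMap

section Lorentz

variable {n : ℕ}

lemma Qform_eq_zero_iff (x : Fin (n + 2) → ℝ) :
    Qform n x = 0 ↔ ∑ i : Fin (n + 1), x i.castSucc ^ 2 = x (Fin.last (n + 1)) ^ 2 :=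
  sub_eq_zero

lemma polar_Qform (x y : Fin (n + 2) → ℝ) :
    polar (Qform n) x y =
      2 * (∑ i : Fin (n + 1), x i.castSucc * y i.castSucc -
        x (Fin.last (n + 1)) * y (Fin.last (n + 1))) := by
  simp only [polar, Qform, Pi.add_apply, add_sq, Finset.sum_add_distrib, mul_assoc,
    ← Finset.mul_sum]
  ring

lemma polar_Qform_mulVec {g : Matrix (Fin (n + 2)) (Fin (n + 2)) ℝ}
    (hg : ∀ x, Qform n (g *ᵥ x) = Qform n x) (x y : Fin (n + 2) → ℝ) :
    polar (Qform n) (g *ᵥ x) (g *ᵥ y) = polar (Qform n) x y := by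
  simp only [polar, ← mulVec_add, hg]

lemma polar_Qform_eOne (y : Fin (n + 2) → ℝ) :
    polar (Qform n) (eOne n) y = 2 * (y 0 - y (Fin.last (n + 1))) := by
  simp [polar_Qform, eOne, Fin.castSucc_eq_zero_iff, (Fin.castSucc_lt_last _).ne]

lemma polar_Qform_embedS (α : Fin (n + 1) → ℝ) (y : Fin (n + 2) → ℝ) :
    polar (Qform n) (embedS n α) y =
      2 * (∑ i, α i * y i.castSucc - y (Fin.last (n + 1))) := by
  simp [polar_Qform, embedS]

variable {α : Fin (n + 1) → ℝ} {rα : Matrix (Fin (n + 2)) (Fin (n + 2)) ℝ}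

lemma mulVec_last_of_preservesHyperplane (hrP : preservesHyperplane n rα)
    (hrα : rα *ᵥ embedS n α = eOne n) (x : Fin (n + 2) → ℝ) :
    (rα *ᵥ x) (Fin.last (n + 1)) = x (Fin.last (n + 1)) := by
  have h := hrP (x - x (Fin.last (n + 1)) • embedS n α) (by simp [embedS])
  rw [mulVec_sub, mulVec_smul, hrα] at h
  simpa [eOne, sub_eq_zero] using h

lemma mulVec_zero_of_preservesHyperplane (hQ : ∀ x, Qform n (rα *ᵥ x) = Qform n x)
    (hrP : preservesHyperplane n rα) (hrα : rα *ᵥ embedS n α = eOne n)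
    (x : Fin (n + 2) → ℝ) : (rα *ᵥ x) 0 = ∑ i, α i * x i.castSucc := by
  have h := polar_Qform_mulVec hQ (embedS n α) x
  rw [hrα, polar_Qform_eOne, polar_Qform_embedS,
    mulVec_last_of_preservesHyperplane hrP hrα] at h
  linarith

lemma sum_sq_mulVec_castSucc (hQ : ∀ x, Qform n (rα *ᵥ x) = Qform n x)
    (hrP : preservesHyperplane n rα) (hrα : rα *ᵥ embedS n α = eOne n)
    {x : Fin (n + 2) → ℝ} (hx : Qform n x = 0) :
    ∑ i : Fin (n + 1), (rα *ᵥ x) i.castSucc ^ 2 = x (Fin.last (n + 1)) ^ 2 := by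
  rw [← mulVec_last_of_preservesHyperplane hrP hrα x, ← Qform_eq_zero_iff, hQ, hx]

end Lorentz

section Flow

variable {n : ℕ} (t : ℝ) (w : Fin (n + 2) → ℝ)

lemma gFlow_mulVec_zero :
    (gFlow n t *ᵥ w) 0 = cosh t * w 0 - sinh t * w (Fin.last (n + 1)) := by
  rw [mulVec, dotProduct, Fintype.sum_eq_add 0 (Fin.last (n + 1)) Fin.last_pos'.ne]
  · simp [gFlow, Fin.last_pos'.ne']; ring
  · intro j hj
    simp [gFlow, hj.1, hj.2, Ne.symm hj.1]

lemma gFlow_mulVec_last :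
    (gFlow n t *ᵥ w) (Fin.last (n + 1)) = -sinh t * w 0 + cosh t * w (Fin.last (n + 1)) := by
  rw [mulVec, dotProduct, Fintype.sum_eq_add 0 (Fin.last (n + 1)) Fin.last_pos'.ne]
  · simp [gFlow, Fin.last_pos'.ne']
  · intro j hj
    simp [gFlow, hj.1, hj.2, Ne.symm hj.2]

lemma gFlow_mulVec_of_ne {k : Fin (n + 2)} (h0 : k ≠ 0) (hl : k ≠ Fin.last (n + 1)) :
    (gFlow n t *ᵥ w) k = w k := by
  rw [mulVec, dotProduct, Fintype.sum_eq_single k]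
  · simp [gFlow, h0, hl]
  · intro j hj
    simp [gFlow, h0, hl, Ne.symm hj]

end Flow

section Estimates

lemma mul_le_two_mul_sq_exp_neg_add_sinh {q S t : ℝ} (hS : 0 ≤ S) (hSq : S ≤ 2 * q)
    (ht : 0 ≤ t) : q * S ≤ 2 * (q * exp (-t) + S * sinh t) ^ 2 := by
  have hsinh : sinh t = (exp t - exp (-t)) / 2 := sinh_eq t
  have hexp : exp (-t) * exp t = 1 := by rw [← exp_add, neg_add_cancel, exp_zero]
  -- the bracket is at least `q e^{-t}` and at least `S e^t / 2`
  have h₁ : q * exp (-t) ≤ q * exp (-t) + S * sinh t :=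
    le_add_of_nonneg_right (mul_nonneg hS (sinh_nonneg_iff.2 ht))
  have h₂ : S * exp t / 2 ≤ q * exp (-t) + S * sinh t := by
    rw [hsinh]; nlinarith [exp_pos (-t)]
  have hA : 0 ≤ q * exp (-t) := by nlinarith [exp_pos (-t)]
  calc q * S = 2 * ((q * exp (-t)) * (S * exp t / 2)) := by
        linear_combination (-(q * S)) * hexp
    _ ≤ 2 * (q * exp (-t) + S * sinh t) ^ 2 := by
        rw [pow_two]
        gcongr 2 * ?_
        exact mul_le_mul h₁ h₂ (by positivity) (hA.trans h₁)

variable {n : ℕ} {w : Fin (n + 2) → ℝ} {q : ℝ}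

lemma sq_add_sq_zero_le (hsum : ∑ i : Fin (n + 1), w i.castSucc ^ 2 = q ^ 2) {k : Fin (n + 2)}
    (h0 : k ≠ 0) (hl : k ≠ Fin.last (n + 1)) : w k ^ 2 + w 0 ^ 2 ≤ q ^ 2 := by
  obtain ⟨i, rfl⟩ := Fin.exists_castSucc_eq.2 hl
  have hi : i ≠ 0 := by rintro rfl; exact h0 rfl
  have h := Finset.sum_le_sum_of_subset_of_nonneg (Finset.subset_univ {i, 0})
    fun j _ _ => sq_nonneg (w (Fin.castSucc j))
  rwa [Finset.sum_pair hi, hsum] at h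

lemma sq_zero_le (hsum : ∑ i : Fin (n + 1), w i.castSucc ^ 2 = q ^ 2) : w 0 ^ 2 ≤ q ^ 2 := by
  rw [← hsum, ← Fin.castSucc_zero]
  exact Finset.single_le_sum (fun j _ => sq_nonneg (w (Fin.castSucc j))) (Finset.mem_univ 0)

lemma mul_sub_le_two_mul_sq_norm_gFlow (hq : 0 ≤ q) (hlast : w (Fin.last (n + 1)) = q)
    (hsum : ∑ i : Fin (n + 1), w i.castSucc ^ 2 = q ^ 2) {t : ℝ} (ht : 0 ≤ t) :
    q * (q - w 0) ≤ 2 * ‖gFlow n t *ᵥ w‖ ^ 2 := by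
  obtain ⟨hw₁, hw₂⟩ := abs_le_of_sq_le_sq' (sq_zero_le hsum) hq
  have hlast' : (gFlow n t *ᵥ w) (Fin.last (n + 1)) = q * exp (-t) + (q - w 0) * sinh t := by
    rw [gFlow_mulVec_last, hlast, ← cosh_sub_sinh]; ring
  calc q * (q - w 0) ≤ 2 * (q * exp (-t) + (q - w 0) * sinh t) ^ 2 :=
        mul_le_two_mul_sq_exp_neg_add_sinh (by linarith) (by linarith) ht
    _ ≤ 2 * ‖gFlow n t *ᵥ w‖ ^ 2 := by
        rw [← hlast', ← sq_abs, ← Real.norm_eq_abs]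
        gcongr
        exact norm_le_pi_norm _ _

lemma norm_gFlow_le (hq : 0 ≤ q) (hlast : w (Fin.last (n + 1)) = q)
    (hsum : ∑ i : Fin (n + 1), w i.castSucc ^ 2 = q ^ 2) {t : ℝ} (ht : 0 ≤ t) :
    ‖gFlow n t *ᵥ w‖ ≤ q * exp (-t) + (q - w 0) * exp t := by
  obtain ⟨hw₁, hw₂⟩ := abs_le_of_sq_le_sq' (sq_zero_le hsum) hq
  have hcosh : cosh t ≤ exp t := by
    rw [cosh_eq]; linarith [exp_le_exp.2 (neg_le_self ht)]
  have hsinh : sinh t ≤ cosh t := (sinh_lt_cosh t).le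
  have hq' : 0 ≤ q * exp (-t) := mul_nonneg hq (exp_pos _).le
  have hS : 0 ≤ (q - w 0) * exp t := mul_nonneg (by linarith) (exp_pos _).le
  refine (pi_norm_le_iff_of_nonneg (add_nonneg hq' hS)).2 fun k => ?_
  rw [Real.norm_eq_abs, abs_le]
  have hSc : (q - w 0) * cosh t ≤ (q - w 0) * exp t :=
    mul_le_mul_of_nonneg_left hcosh (by linarith)
  have hSs : (q - w 0) * sinh t ≤ (q - w 0) * exp t :=
    mul_le_mul_of_nonneg_left (hsinh.trans hcosh) (by linarith)
  have hSs' : 0 ≤ (q - w 0) * sinh t := mul_nonneg (by linarith) (sinh_nonneg_iff.2 ht)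
  have hSc' : 0 ≤ (q - w 0) * cosh t := mul_nonneg (by linarith) (cosh_pos t).le
  by_cases h0 : k = 0
  · subst h0
    have : (gFlow n t *ᵥ w) 0 = q * exp (-t) - (q - w 0) * cosh t := by
      rw [gFlow_mulVec_zero, hlast, ← cosh_sub_sinh]; ring
    rw [this]; constructor <;> linarith
  by_cases hl : k = Fin.last (n + 1)
  · subst hl
    have : (gFlow n t *ᵥ w) (Fin.last (n + 1)) = q * exp (-t) + (q - w 0) * sinh t := by
      rw [gFlow_mulVec_last, hlast, ← cosh_sub_sinh]; ring
    rw [this]; constructor <;> linarith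
  -- the middle coordinates are fixed, and `w k ^ 2 ≤ 2 q (q - w 0)` is at most the square
  -- of the bound by AM-GM
  rw [gFlow_mulVec_of_ne t w h0 hl, ← abs_le]
  have hexp : q * exp (-t) * ((q - w 0) * exp t) = q * (q - w 0) := by
    rw [mul_mul_mul_comm, ← exp_add, neg_add_cancel, exp_zero, mul_one]
  apply abs_le_of_sq_le_sq _ (add_nonneg hq' hS)
  nlinarith [sq_add_sq_zero_le hsum h0 hl, sq_nonneg (q * exp (-t) - (q - w 0) * exp t)]

end Estimates

section Approximation

variable {ι : Type*} [Fintype ι]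

lemma sq_norm_le_sum_sq (x : ι → ℝ) : ‖x‖ ^ 2 ≤ ∑ i, x i ^ 2 := by
  rw [← Real.le_sqrt (norm_nonneg x) (Finset.sum_nonneg fun i _ => sq_nonneg (x i))]
  refine (pi_norm_le_iff_of_nonneg (Real.sqrt_nonneg _)).2 fun i => ?_
  rw [Real.norm_eq_abs]
  exact Real.abs_le_sqrt (Finset.single_le_sum (fun j _ => sq_nonneg (x j)) (Finset.mem_univ i))

lemma sum_sq_le_card_mul_sq_norm (x : ι → ℝ) : ∑ i, x i ^ 2 ≤ Fintype.card ι * ‖x‖ ^ 2 := by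
  calc ∑ i, x i ^ 2 ≤ ∑ _i : ι, ‖x‖ ^ 2 := Finset.sum_le_sum fun i _ => by
        rw [← sq_abs, ← Real.norm_eq_abs]
        gcongr
        exact norm_le_pi_norm x i
    _ = Fintype.card ι * ‖x‖ ^ 2 := by simp

variable {n : ℕ} {p : Fin (n + 1) → ℤ} {q : ℕ}

lemma ratPt_mem_unitSphere_iff (hq : 0 < q) :
    ratPt n p q ∈ unitSphere n ↔ ∑ i, (p i : ℝ) ^ 2 = (q : ℝ) ^ 2 := by
  have hq' : (q : ℝ) ^ 2 ≠ 0 := by positivity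
  change ∑ i, ((p i : ℝ) / q) ^ 2 = 1 ↔ _
  simp only [div_pow, ← Finset.sum_div, div_eq_one_iff_eq hq']

lemma sq_mul_sum_sq_sub_ratPt {α : Fin (n + 1) → ℝ} (hα : α ∈ unitSphere n) (hq : 0 < q)
    (hpq : ∑ i, (p i : ℝ) ^ 2 = (q : ℝ) ^ 2) :
    (q : ℝ) ^ 2 * ∑ i, (α - ratPt n p q) i ^ 2 = 2 * (q * (q - ∑ i, α i * p i)) := by
  have hq' : (q : ℝ) ≠ 0 := by positivity
  have hα' : ∑ i, α i ^ 2 = 1 := hα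
  have h : ∀ i, (q : ℝ) ^ 2 * (α - ratPt n p q) i ^ 2 =
      q ^ 2 * α i ^ 2 - 2 * q * (α i * p i) + (p i : ℝ) ^ 2 := fun i => by
    simp only [Pi.sub_apply, ratPt]
    field_simp
    ring
  rw [Finset.mul_sum, Finset.sum_congr rfl fun i _ => h i, Finset.sum_add_distrib,
    Finset.sum_sub_distrib, ← Finset.mul_sum, ← Finset.mul_sum, hα', hpq]
  ring

end Approximation

section LatticePoints

variable {n : ℕ}

lemma vecPQ_mem_Lambda0_iff {p : Fin (n + 1) → ℤ} {q : ℕ} :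
    vecPQ n p q ∈ Lambda0 n ↔ ∑ i, (p i : ℝ) ^ 2 = (q : ℝ) ^ 2 := by
  have hint : ∀ k, ∃ m : ℤ, vecPQ n p q k = m :=
    fun k => Fin.lastCases ⟨q, by simp [vecPQ]⟩ (fun i => ⟨p i, by simp [vecPQ]⟩) k
  change (∀ k, _) ∧ Qform n _ = 0 ↔ _
  rw [and_iff_right hint, Qform_eq_zero_iff]
  simp [vecPQ]

lemma vecPQ_ne_zero (p : Fin (n + 1) → ℤ) {q : ℕ} (hq : 0 < q) : vecPQ n p q ≠ 0 := by
  intro h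
  have := congrFun h (Fin.last (n + 1))
  simp [vecPQ] at this
  omega

lemma neg_mem_Lambda0 {v : Fin (n + 2) → ℝ} (hv : v ∈ Lambda0 n) : -v ∈ Lambda0 n := by
  refine ⟨fun k => ?_, ?_⟩
  · obtain ⟨m, hm⟩ := hv.1 k
    exact ⟨-m, by simp [hm]⟩
  · simpa [Qform] using hv.2

lemma last_ne_zero_of_mem_Lambda0 {v : Fin (n + 2) → ℝ} (hv : v ∈ Lambda0 n) (hv0 : v ≠ 0) :
    v (Fin.last (n + 1)) ≠ 0 := by
  intro hl
  have hsum := (Qform_eq_zero_iff v).1 hv.2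
  rw [hl, zero_pow two_ne_zero,
    Finset.sum_eq_zero_iff_of_nonneg fun i _ => sq_nonneg (v (Fin.castSucc i))] at hsum
  exact hv0 (funext fun k => Fin.lastCases hl
    (fun i => pow_eq_zero_iff two_ne_zero |>.1 (hsum i (Finset.mem_univ i))) k)

lemma exists_eq_vecPQ_of_mem_Lambda0 {v : Fin (n + 2) → ℝ} (hv : v ∈ Lambda0 n)
    (hpos : 0 < v (Fin.last (n + 1))) :
    ∃ (p : Fin (n + 1) → ℤ) (q : ℕ), 0 < q ∧ v = vecPQ n p q := by
  choose m hm using hv.1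
  have hq : 0 < m (Fin.last (n + 1)) := by rw [hm] at hpos; exact_mod_cast hpos
  refine ⟨fun i => m i.castSucc, (m (Fin.last (n + 1))).toNat, by omega, funext fun k => ?_⟩
  refine Fin.lastCases ?_ (fun i => by simp [vecPQ, hm]) k
  simp only [vecPQ, Fin.snoc_last, hm]
  exact_mod_cast (Int.toNat_of_nonneg hq.le).symm

lemma exists_vecPQ_of_mem_Lambda0 {v : Fin (n + 2) → ℝ} (hv : v ∈ Lambda0 n) (hv0 : v ≠ 0) :
    ∃ (p : Fin (n + 1) → ℤ) (q : ℕ), 0 < q ∧ ∑ i, (p i : ℝ) ^ 2 = (q : ℝ) ^ 2 ∧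
      (v = vecPQ n p q ∨ v = -vecPQ n p q) := by
  rcases (last_ne_zero_of_mem_Lambda0 hv hv0).lt_or_gt with hneg | hpos
  · obtain ⟨p, q, hq, hpq⟩ :=
      exists_eq_vecPQ_of_mem_Lambda0 (neg_mem_Lambda0 hv) (by simpa using hneg)
    refine ⟨p, q, hq, vecPQ_mem_Lambda0_iff.1 (hpq ▸ neg_mem_Lambda0 hv), Or.inr ?_⟩
    rw [← hpq, neg_neg]
  · obtain ⟨p, q, hq, rfl⟩ := exists_eq_vecPQ_of_mem_Lambda0 hv hpos
    exact ⟨p, q, hq, vecPQ_mem_Lambda0_iff.1 hv, Or.inl rfl⟩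

end LatticePoints

section Orbit

variable {n : ℕ} {α : Fin (n + 1) → ℝ} {rα : Matrix (Fin (n + 2)) (Fin (n + 2)) ℝ}
  {p : Fin (n + 1) → ℤ} {q : ℕ}

lemma mulVec_vecPQ_last (hrP : preservesHyperplane n rα) (hrα : rα *ᵥ embedS n α = eOne n) :
    (rα *ᵥ vecPQ n p q) (Fin.last (n + 1)) = q := by
  simp [mulVec_last_of_preservesHyperplane hrP hrα, vecPQ]

lemma mulVec_vecPQ_zero (hQ : ∀ x, Qform n (rα *ᵥ x) = Qform n x)
    (hrP : preservesHyperplane n rα) (hrα : rα *ᵥ embedS n α = eOne n) :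
    (rα *ᵥ vecPQ n p q) 0 = ∑ i, α i * p i := by
  simp [mulVec_zero_of_preservesHyperplane hQ hrP hrα, vecPQ]

lemma sum_sq_mulVec_vecPQ (hQ : ∀ x, Qform n (rα *ᵥ x) = Qform n x)
    (hrP : preservesHyperplane n rα) (hrα : rα *ᵥ embedS n α = eOne n)
    (hpq : ∑ i, (p i : ℝ) ^ 2 = (q : ℝ) ^ 2) :
    ∑ i : Fin (n + 1), (rα *ᵥ vecPQ n p q) i.castSucc ^ 2 = (q : ℝ) ^ 2 := by
  simpa [vecPQ] using sum_sq_mulVec_castSucc hQ hrP hrα (vecPQ_mem_Lambda0_iff.2 hpq).2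

lemma mul_norm_sub_ratPt_le_two_mul_norm_orbit (hα : α ∈ unitSphere n)
    (hQ : ∀ x, Qform n (rα *ᵥ x) = Qform n x) (hrP : preservesHyperplane n rα)
    (hrα : rα *ᵥ embedS n α = eOne n) (hq : 0 < q) (hpq : ∑ i, (p i : ℝ) ^ 2 = (q : ℝ) ^ 2)
    {t : ℝ} (ht : 0 ≤ t) :
    q * ‖α - ratPt n p q‖ ≤ 2 * ‖(gFlow n t * rα) *ᵥ vecPQ n p q‖ := by
  have hgap := mul_sub_le_two_mul_sq_norm_gFlow (Nat.cast_nonneg q) (mulVec_vecPQ_last hrP hrα)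
    (sum_sq_mulVec_vecPQ hQ hrP hrα hpq) ht
  rw [mulVec_vecPQ_zero hQ hrP hrα] at hgap
  rw [← mulVec_mulVec, ← pow_le_pow_iff_left₀ (by positivity) (by positivity) two_ne_zero]
  calc ((q : ℝ) * ‖α - ratPt n p q‖) ^ 2 = q ^ 2 * ‖α - ratPt n p q‖ ^ 2 := mul_pow _ _ _
    _ ≤ q ^ 2 * ∑ i, (α - ratPt n p q) i ^ 2 := by gcongr; exact sq_norm_le_sum_sq _
    _ = 2 * (q * (q - ∑ i, α i * p i)) := sq_mul_sum_sq_sub_ratPt hα hq hpq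
    _ ≤ (2 * ‖gFlow n t *ᵥ rα *ᵥ vecPQ n p q‖) ^ 2 := by linarith

lemma exists_norm_orbit_le (hα : α ∈ unitSphere n)
    (hQ : ∀ x, Qform n (rα *ᵥ x) = Qform n x) (hrP : preservesHyperplane n rα)
    (hrα : rα *ᵥ embedS n α = eOne n) (hq : 0 < q) (hpq : ∑ i, (p i : ℝ) ^ 2 = (q : ℝ) ^ 2)
    {c : ℝ} (hc : 0 < c) (hcq : c ≤ 4 * q) (hd : 4 * (n + 1) * (q * ‖α - ratPt n p q‖) ≤ c) :
    ∃ t, 0 ≤ t ∧ ‖(gFlow n t * rα) *ᵥ vecPQ n p q‖ ≤ 3 * c / 8 := by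
  have hq' : (0 : ℝ) < q := Nat.cast_pos.2 hq
  have hexp : exp (log (4 * q / c)) = 4 * q / c := exp_log (by positivity)
  refine ⟨log (4 * q / c), log_nonneg ((one_le_div hc).2 hcq), ?_⟩
  have hbound := norm_gFlow_le (Nat.cast_nonneg q) (mulVec_vecPQ_last hrP hrα)
    (sum_sq_mulVec_vecPQ hQ hrP hrα hpq) (log_nonneg ((one_le_div hc).2 hcq))
  rw [exp_neg, hexp, mulVec_vecPQ_zero hQ hrP hrα] at hbound
  have hgap : 32 * (q * (q - ∑ i, α i * p i)) ≤ c ^ 2 := by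
    have hN : (n + 1 : ℝ) ≤ (n + 1) ^ 2 := by nlinarith [(n.cast_nonneg : (0 : ℝ) ≤ n)]
    calc 32 * (q * (q - ∑ i, α i * p i)) = 16 * (q ^ 2 * ∑ i, (α - ratPt n p q) i ^ 2) := by
          rw [sq_mul_sum_sq_sub_ratPt hα hq hpq]; ring
      _ ≤ 16 * (q ^ 2 * ((n + 1) * ‖α - ratPt n p q‖ ^ 2)) := by
          gcongr; simpa using sum_sq_le_card_mul_sq_norm (α - ratPt n p q)
      _ = 16 * (n + 1) * (q * ‖α - ratPt n p q‖) ^ 2 := by ring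
      _ ≤ 16 * (n + 1) ^ 2 * (q * ‖α - ratPt n p q‖) ^ 2 := by gcongr
      _ = (4 * (n + 1) * (q * ‖α - ratPt n p q‖)) ^ 2 := by ring
      _ ≤ c ^ 2 := by gcongr
  have hq_exp : (q : ℝ) * (4 * q / c)⁻¹ = c / 4 := by field_simp
  have hgap_exp : (q - ∑ i, α i * p i) * (4 * q / c) ≤ c / 8 := by
    rw [← mul_div_assoc, div_le_div_iff₀ hc (by norm_num)]
    nlinarith
  rw [← mulVec_mulVec]
  linarith

end Orbit

theorem badlyApproximable_iff_bounded_orbit_general (n : ℕ)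
    (α : Fin (n + 1) → ℝ) (hα : α ∈ unitSphere n)
    (rα : Matrix (Fin (n + 2)) (Fin (n + 2)) ℝ) (hrG : isSOQ n rα)
    (hrP : preservesHyperplane n rα) (hrα : rα.mulVec (embedS n α) = eOne n) :
    α ∈ badlyApproximable n ↔
      ∃ c : ℝ, 0 < c ∧ ∀ t : ℝ, 0 ≤ t → ∀ v ∈ Lambda0 n, v ≠ 0 →
        c ≤ ‖(gFlow n t * rα).mulVec v‖ := by
  constructor
  · rintro ⟨-, c, hc, hBA⟩
    refine ⟨c / 2, by positivity, fun t ht v hv hv0 => ?_⟩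
    obtain ⟨p, q, hq, hpq, hv⟩ := exists_vecPQ_of_mem_Lambda0 hv hv0
    have hnorm : ‖(gFlow n t * rα) *ᵥ v‖ = ‖(gFlow n t * rα) *ᵥ vecPQ n p q‖ := by
      rcases hv with rfl | rfl <;> simp [mulVec_neg]
    have hcd := (div_lt_iff₀' (Nat.cast_pos.2 hq)).1
      (hBA p q hq ((ratPt_mem_unitSphere_iff hq).2 hpq))
    have := mul_norm_sub_ratPt_le_two_mul_norm_orbit hα hrG.2 hrP hrα hq hpq ht
    rw [hnorm]
    linarith
  · rintro ⟨c, hc, hbound⟩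
    refine ⟨hα, min c 1 / (4 * (n + 1)), by positivity, fun p q hq hsph => ?_⟩
    by_contra! hclose
    have hpq := (ratPt_mem_unitSphere_iff hq).1 hsph
    have hq1 : (1 : ℝ) ≤ q := Nat.one_le_cast.2 hq
    obtain ⟨t, ht, hsmall⟩ := exists_norm_orbit_le hα hrG.2 hrP hrα hq hpq
      (c := min c 1) (by positivity) (by linarith [min_le_right c 1]) (by
        rw [le_div_iff₀ (by positivity), le_div_iff₀ (by positivity)] at hclose
        linarith)
    have := hbound t ht _ (vecPQ_mem_Lambda0_iff.2 hpq) (vecPQ_ne_zero p hq)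
    linarith [min_le_left c 1]

/-- Dynamical characterization of badly approximable points: `α ∈ BA(Sⁿ)` if and only if
there is `c > 0` such that `‖g_t r_α v‖ ≥ c` for all `t ≥ 0` and all nonzero `v ∈ Λ₀`,
i.e. the forward orbit `{g_t r_α Λ₀ : t ≥ 0}` is bounded in the space of lattices. -/
theorem badlyApproximable_iff_bounded_orbit (n : ℕ) (hn : 1 ≤ n)
    (α : Fin (n + 1) → ℝ) (hα : α ∈ unitSphere n)
    (rα : Matrix (Fin (n + 2)) (Fin (n + 2)) ℝ) (hrG : isSOQ n rα)
    (hrP : preservesHyperplane n rα) (hrα : rα.mulVec (embedS n α) = eOne n) :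
    α ∈ badlyApproximable n ↔
      ∃ c : ℝ, 0 < c ∧ ∀ t : ℝ, 0 ≤ t → ∀ v ∈ Lambda0 n, v ≠ 0 →
        c ≤ ‖(gFlow n t * rα).mulVec v‖ :=
  badlyApproximable_iff_bounded_orbit_general n α hα rα hrG hrP hrα
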